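/- If G is a 4-Ore graph, then p(G) ≤ 1.8, where the inequality is over the rationals (1.8 = 9/5). -/

import Mathlib

open SimpleGraph

/-- The degree of a vertex, as the cardinality of its neighbor set. -/
noncomputable def deg {V : Type} (G : SimpleGraph V) (v : V) : ℕ :=
  Nat.card (G.neighborSet v)

/-- The number of edges of a graph. -/
noncomputable def numEdges {V : Type} (G : SimpleGraph V) : ℕ :=
  Nat.card G.edgeSet

/-- The independence number of a graph. -/
noncomputable def indepNum {V : Type} (G : SimpleGraph V) : ℕ :=
  sSup {n | ∃ s : Set V, (∀ u ∈ s, ∀ v ∈ s, ¬ G.Adj u v) ∧ s.ncard = n}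

/-- The set of vertices of degree at most three. -/
noncomputable def D3set {V : Type} (G : SimpleGraph V) : Set V :=
  {v | deg G v ≤ 3}

/-- `D3(G)`: the subgraph induced by the vertices of degree at most three. -/
noncomputable def D3 {V : Type} (G : SimpleGraph V) : SimpleGraph (D3set G) :=
  G.induce (D3set G)

/-- The potential of a graph: `p(G) = 4.8 |V(G)| - 3 |E(G)| + 0.6 α(D3(G))`. -/
noncomputable def potential {V : Type} (G : SimpleGraph V) : ℚ :=
  (24/5 : ℚ) * Nat.card V - 3 * numEdges G + (3/5 : ℚ) * _root_.indepNum (D3 G)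

/-- The potential of a subset `R` of the vertices of `G`:
`p(R) = 4.8 |R| - 3 |E(G[R])| + 0.6 α(G[D3(G) ∩ R])`. -/
noncomputable def potentialOf {V : Type} (G : SimpleGraph V) (R : Set V) : ℚ :=
  (24/5 : ℚ) * R.ncard - 3 * numEdges (G.induce R)
    + (3/5 : ℚ) * _root_.indepNum (G.induce (D3set G ∩ R))

/-- A graph is `k`-critical if it is not `(k-1)`-colorable but every proper
subgraph is `(k-1)`-colorable. -/
def IsKCritical {V : Type} (G : SimpleGraph V) (k : ℕ) : Prop :=
  ¬ G.Colorable (k - 1) ∧ ∀ H : SimpleGraph V, H ≤ G → H ≠ G → H.Colorable (k - 1)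

/-- A graph has Ore-degree at most `d` if `d(u) + d(v) ≤ d` for every edge `uv`. -/
def OreDegreeAtMost {V : Type} (G : SimpleGraph V) (d : ℕ) : Prop :=
  ∀ u v, G.Adj u v → deg G u + deg G v ≤ d

/-- The Ore-composition of `G1` (edge-side, with replaced edge `xy`) and `G2`
(split-side, with split vertex `z` whose incident edges going to `A` are attached
to `x` and the remaining ones to `y`). -/
def oreCompose {V1 V2 : Type} (G1 : SimpleGraph V1) (G2 : SimpleGraph V2)
    (x y : V1) (z : V2) (A : Set V2) :
    SimpleGraph (V1 ⊕ {v : V2 // v ≠ z}) :=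
  SimpleGraph.fromRel (fun a b =>
    match a, b with
    | Sum.inl u, Sum.inl v =>
        G1.Adj u v ∧ ¬((u = x ∧ v = y) ∨ (u = y ∧ v = x))
    | Sum.inl u, Sum.inr v =>
        (u = x ∧ G2.Adj z v.1 ∧ v.1 ∈ A) ∨ (u = y ∧ G2.Adj z v.1 ∧ v.1 ∉ A)
    | Sum.inr _, Sum.inl _ => False
    | Sum.inr u, Sum.inr v => G2.Adj u.1 v.1)

/-- `G` is an Ore-composition of `G1` and `G2`: there are a replaced edge `xy` of
`G1`, a split vertex `z` of `G2`, and a splitting of the edges at `z` into two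
nonempty parts, such that `G` is isomorphic to the resulting composition. -/
def IsOreComposition {V V1 V2 : Type} (G : SimpleGraph V)
    (G1 : SimpleGraph V1) (G2 : SimpleGraph V2) : Prop :=
  ∃ (x y : V1) (z : V2) (A : Set V2),
    G1.Adj x y ∧ (∃ p, G2.Adj z p ∧ p ∈ A) ∧ (∃ q, G2.Adj z q ∧ q ∉ A) ∧
    Nonempty (G ≃g oreCompose G1 G2 x y z A)

/-- The family of `4`-Ore graphs: the smallest family of graphs containing `K4`
and closed under Ore-compositions. -/
inductive IsFourOre : ∀ {V : Type}, SimpleGraph V → Prop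
  | k4 {V : Type} (G : SimpleGraph V) :
      Nonempty (G ≃g completeGraph (Fin 4)) → IsFourOre G
  | comp {V V1 V2 : Type} (G : SimpleGraph V)
      (G1 : SimpleGraph V1) (G2 : SimpleGraph V2) :
      IsFourOre G1 → IsFourOre G2 → IsOreComposition G G1 G2 → IsFourOre G

/-- The boundary of a set `R`: the vertices of `R` with a neighbor outside `R`. -/
def boundary {V : Type} (G : SimpleGraph V) (R : Set V) : Set V :=
  {v | v ∈ R ∧ ∃ u, u ∉ R ∧ G.Adj v u}

/-- A proper subset `R` of the vertices with `|R| ≥ 2` is collapsible if in every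
proper 3-coloring of `G[R]` all vertices of the boundary of `R` get the same color. -/
def Collapsible {V : Type} (G : SimpleGraph V) (R : Set V) : Prop :=
  R ≠ Set.univ ∧ 2 ≤ R.ncard ∧
  ∀ φ : V → Fin 3, (∀ u ∈ R, ∀ v ∈ R, G.Adj u v → φ u ≠ φ v) →
    ∀ u ∈ boundary G R, ∀ v ∈ boundary G R, φ u = φ v

/-- The critical complement of a set `R`: identify the boundary of `R` to a single
vertex (the vertex `none`) and delete the rest of `R`. -/
def criticalComplement {V : Type} (G : SimpleGraph V) (R : Set V) :
    SimpleGraph (Option {v : V // v ∉ R}) :=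
  SimpleGraph.fromRel (fun a b =>
    match a, b with
    | some u, some v => G.Adj u.1 v.1
    | some u, none => ∃ w ∈ boundary G R, G.Adj u.1 w
    | none, some _ => False
    | none, none => False)

/-- A nonempty proper subset `R` with boundary `S` is cocollapsible if every vertex
of `S` has exactly one neighbor outside `R`, and for every non-constant list of
forbidden colors on `S` there is a proper 3-coloring of `G[R]` avoiding them. -/
def Cocollapsible {V : Type} (G : SimpleGraph V) (R : Set V) : Prop :=
  R.Nonempty ∧ R ≠ Set.univ ∧
  (∀ v ∈ boundary G R, ∃! u, u ∉ R ∧ G.Adj v u) ∧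
  ∀ f : V → Fin 3,
    (∃ u ∈ boundary G R, ∃ v ∈ boundary G R, f u ≠ f v) →
    ∃ φ : V → Fin 3, (∀ u ∈ R, ∀ v ∈ R, G.Adj u v → φ u ≠ φ v) ∧
      ∀ v ∈ boundary G R, φ v ≠ f v

/-- A cocollapsible set is nontrivial if its complement has more than one vertex. -/
def NontrivialCocollapsible {V : Type} (G : SimpleGraph V) (R : Set V) : Prop :=
  Cocollapsible G R ∧ 1 < (Rᶜ : Set V).ncard

/-- The graph `H` together with the (possibly new) edge `uv`. -/
def withEdge {W : Type} (H : SimpleGraph W) (u v : W) : SimpleGraph W :=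
  H ⊔ SimpleGraph.fromEdgeSet {s(u, v)}

/-- A collapsible set `R` is tight if for any two distinct boundary vertices `u, v`
the graph `G[R] + uv` is `4`-critical. -/
def TightCollapsible {V : Type} (G : SimpleGraph V) (R : Set V) : Prop :=
  Collapsible G R ∧
  ∀ u (hu : u ∈ boundary G R) v (hv : v ∈ boundary G R), u ≠ v →
    IsKCritical (withEdge (G.induce R) ⟨u, hu.1⟩ ⟨v, hv.1⟩) 4

/-- `s(H) = |E(H)| - |V(H)| + α(H)`. -/
noncomputable def sVal {V : Type} (H : SimpleGraph V) : ℤ :=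
  (numEdges H : ℤ) - (Nat.card V : ℤ) + (_root_.indepNum H : ℤ)

/-- `H7`: the unique Ore-composition of two copies of `K4`. Vertices `0,1,2,3`
form the edge-side `K4` with replaced edge `01`; the split vertex of the second
`K4` on `{z,4,5,6}` is split so that `0` gets the edge to `4` and `1` gets the
edges to `5` and `6`. -/
def H7 : SimpleGraph (Fin 7) :=
  SimpleGraph.fromRel (fun a b =>
    ((a, b) : Fin 7 × Fin 7) ∈
      ([(0, 2), (0, 3), (1, 2), (1, 3), (2, 3), (4, 5), (4, 6), (5, 6),
        (0, 4), (1, 5), (1, 6)] : List (Fin 7 × Fin 7)))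

/-- A diamond in `G`: a subgraph isomorphic to `K4` minus an edge whose two
vertices of degree three within the subgraph (`w1` and `w2`) also have degree
three in `G`.  The vertices `e1` and `e2` are the ends of the diamond. -/
def IsDiamond {V : Type} (G : SimpleGraph V) (e1 e2 w1 w2 : V) : Prop :=
  e1 ≠ e2 ∧ e1 ≠ w1 ∧ e1 ≠ w2 ∧ e2 ≠ w1 ∧ e2 ≠ w2 ∧ w1 ≠ w2 ∧
  G.Adj w1 w2 ∧ G.Adj e1 w1 ∧ G.Adj e1 w2 ∧ G.Adj e2 w1 ∧ G.Adj e2 w2 ∧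
  deg G w1 = 3 ∧ deg G w2 = 3

/-- A triangle with a pendant edge. -/
def trianglePendant1 : SimpleGraph (Fin 4) :=
  SimpleGraph.fromRel (fun a b =>
    ((a, b) : Fin 4 × Fin 4) ∈ ([(0, 1), (1, 2), (2, 0), (0, 3)] : List (Fin 4 × Fin 4)))

/-- A triangle with a pendant path on two further vertices. -/
def trianglePendant2 : SimpleGraph (Fin 5) :=
  SimpleGraph.fromRel (fun a b =>
    ((a, b) : Fin 5 × Fin 5) ∈
      ([(0, 1), (1, 2), (2, 0), (0, 3), (3, 4)] : List (Fin 5 × Fin 5)))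

/-!
A `4`-Ore graph on `n` vertices has minimum degree three, exactly `(5n - 2)/3` edges, and no
independent set of more than `(n - 1)/3` vertices of degree at most three. All three properties
survive an Ore-composition: it has `n₁ + n₂ - 1` vertices and `e₁ + e₂ - 1` edges, an independent
set splits into independent sets of the two parts, and the ends `x`, `y` of the deleted edge
cannot both have degree three, because `d(x) + d(y) = d₁(x) + d₁(y) + d₂(z) - 2 ≥ 7`.
Hence `p(G) = 2 - n/5 + 3α/5 ≤ 9/5`.
-/

open Sum

section Counting
variable {V : Type}

lemma deg_eq_degree [Fintype V] (G : SimpleGraph V) [DecidableRel G.Adj] (v : V) :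
    deg G v = G.degree v := by
  rw [deg, ← card_neighborSet_eq_degree, Nat.card_eq_fintype_card]

lemma deg_eq_ncard (G : SimpleGraph V) (v : V) : deg G v = (G.neighborSet v).ncard :=
  Nat.card_coe_set_eq _

lemma card_subtype_ne_add_one [Finite V] (z : V) : Nat.card {v // v ≠ z} + 1 = Nat.card V := by
  classical
  rw [← Finite.card_option, Nat.card_congr (Equiv.optionSubtypeNe z)]

lemma Set.ncard_preimage_inl_add_ncard_preimage_inr {W : Type} [Finite V] [Finite W]
    (S : Set (V ⊕ W)) : (inl ⁻¹' S).ncard + (inr ⁻¹' S).ncard = S.ncard := by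
  conv_rhs => rw [← Set.image_preimage_inl_union_image_preimage_inr S]
  rw [Set.ncard_union_eq Set.disjoint_image_inl_image_inr,
    Set.ncard_image_of_injective _ inl_injective, Set.ncard_image_of_injective _ inr_injective]

lemma sum_deg_eq_two_mul_numEdges [Fintype V] (G : SimpleGraph V) :
    ∑ v, deg G v = 2 * numEdges G := by
  classical
  simp_rw [deg_eq_degree, numEdges, Nat.card_eq_fintype_card, ← edgeFinset_card]
  exact G.sum_degrees_eq_twice_card_edges

lemma exists_ncard_eq_indepNum [Finite V] (G : SimpleGraph V) :
    ∃ s : Set V, (∀ u ∈ s, ∀ v ∈ s, ¬ G.Adj u v) ∧ s.ncard = _root_.indepNum G := by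
  refine Nat.sSup_mem
    (s := {n | ∃ s : Set V, (∀ u ∈ s, ∀ v ∈ s, ¬ G.Adj u v) ∧ s.ncard = n})
    ⟨0, ∅, by simp, by simp⟩ ⟨Nat.card V, ?_⟩
  rintro n ⟨t, -, rfl⟩
  exact Set.ncard_le_card t

lemma deg_iso {W : Type} {G : SimpleGraph V} {G' : SimpleGraph W} (e : G ≃g G') (v : V) :
    deg G' (e v) = deg G v :=
  (Nat.card_congr (e.mapNeighborSet v)).symm

lemma numEdges_iso {W : Type} {G : SimpleGraph V} {G' : SimpleGraph W} (e : G ≃g G') :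
    numEdges G' = numEdges G :=
  (Nat.card_congr e.mapEdgeSet).symm

end Counting

structure FourOreBounds {V : Type} (G : SimpleGraph V) : Prop where
  finite : Finite V
  three_le_deg : ∀ v, 3 ≤ deg G v
  three_mul_numEdges_add_two : 3 * numEdges G + 2 = 5 * Nat.card V
  three_mul_ncard_add_one_le : ∀ S : Set V, (∀ v ∈ S, deg G v ≤ 3) →
    (∀ u ∈ S, ∀ v ∈ S, ¬ G.Adj u v) → 3 * S.ncard + 1 ≤ Nat.card V

namespace FourOreBounds
variable {V W : Type} {G : SimpleGraph V}

lemma of_iso {G' : SimpleGraph W} (e : G ≃g G') (h : FourOreBounds G) : FourOreBounds G' := by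
  have hcard : Nat.card W = Nat.card V := (Nat.card_congr e.toEquiv).symm
  refine ⟨have := h.finite; .of_equiv V e.toEquiv, fun w => ?_, ?_, fun S hS3 hS => ?_⟩
  · simpa [deg_iso] using h.three_le_deg (e.symm w)
  · rw [numEdges_iso e, hcard, h.three_mul_numEdges_add_two]
  · have hpre : (e ⁻¹' S).ncard = S.ncard :=
      Set.ncard_preimage_of_injective_subset_range e.injective (by simp [e.surjective.range_eq])
    rw [← hpre, hcard]
    exact h.three_mul_ncard_add_one_le _ (fun v hv => deg_iso e v ▸ hS3 _ hv)
      (fun u hu v hv huv => hS _ hu _ hv (e.map_adj_iff.mpr huv))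

lemma completeGraph_fin_four : FourOreBounds (completeGraph (Fin 4)) := by
  classical
  refine ⟨inferInstance, fun v => ?_, ?_, fun S _ hS => ?_⟩
  · rw [deg_eq_degree, complete_graph_degree, Fintype.card_fin]
  · rw [numEdges, Nat.card_eq_fintype_card, ← edgeFinset_card,
      card_edgeFinset_top_eq_card_choose_two]
    simp [Nat.choose]
  · have : S.ncard ≤ 1 :=
      Set.ncard_le_one_iff_subsingleton.mpr fun u hu v hv => not_not.mp (hS u hu v hv)
    simp only [Nat.card_eq_fintype_card, Fintype.card_fin]
    omega

end FourOreBounds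

section OreCompose
variable {V1 V2 : Type} {G1 : SimpleGraph V1} {G2 : SimpleGraph V2} {x y : V1} {z : V2}
  {A : Set V2}

@[simp]
lemma oreCompose_adj_inl_inl {u v : V1} :
    (oreCompose G1 G2 x y z A).Adj (inl u) (inl v) ↔
      G1.Adj u v ∧ ¬((u = x ∧ v = y) ∨ (u = y ∧ v = x)) := by
  rw [oreCompose, fromRel_adj]
  constructor
  · rintro ⟨-, h | h⟩
    · exact h
    · exact ⟨h.1.symm, by tauto⟩
  · exact fun h => ⟨fun huv => h.1.ne (inl_injective huv), Or.inl h⟩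

@[simp]
lemma oreCompose_adj_inl_inr {u : V1} {v : {v : V2 // v ≠ z}} :
    (oreCompose G1 G2 x y z A).Adj (inl u) (inr v) ↔
      (u = x ∧ G2.Adj z v ∧ v.1 ∈ A) ∨ (u = y ∧ G2.Adj z v ∧ v.1 ∉ A) := by
  simp [oreCompose]

@[simp]
lemma oreCompose_adj_inr_inr {u v : {v : V2 // v ≠ z}} :
    (oreCompose G1 G2 x y z A).Adj (inr u) (inr v) ↔ G2.Adj u v := by
  rw [oreCompose, fromRel_adj]
  exact ⟨fun ⟨_, h⟩ => h.elim id Adj.symm,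
    fun h => ⟨fun huv => h.ne (congrArg Subtype.val (inr_injective huv)), Or.inl h⟩⟩

lemma oreCompose_swap : oreCompose G1 G2 x y z A = oreCompose G1 G2 y x z Aᶜ := by
  ext (u | u) (v | v)
  · simp only [oreCompose_adj_inl_inl]; tauto
  · simp only [oreCompose_adj_inl_inr, Set.mem_compl_iff, not_not]; tauto
  · rw [(oreCompose G1 G2 x y z A).adj_comm, (oreCompose G1 G2 y x z Aᶜ).adj_comm]
    simp only [oreCompose_adj_inl_inr, Set.mem_compl_iff, not_not]; tauto
  · simp

lemma neighborSet_oreCompose_inl {v : V1} (hvx : v ≠ x) (hvy : v ≠ y) :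
    (oreCompose G1 G2 x y z A).neighborSet (inl v) = inl '' G1.neighborSet v := by
  ext (u | u) <;> simp [hvx, hvy]

lemma neighborSet_oreCompose_inl_left (hxy : x ≠ y) :
    (oreCompose G1 G2 x y z A).neighborSet (inl x) =
      inl '' (G1.neighborSet x \ {y}) ∪ inr '' (Subtype.val ⁻¹' (G2.neighborSet z ∩ A)) := by
  ext (u | u) <;> simp [hxy]

lemma deg_oreCompose_inl {v : V1} (hvx : v ≠ x) (hvy : v ≠ y) :
    deg (oreCompose G1 G2 x y z A) (inl v) = deg G1 v := by
  rw [deg, neighborSet_oreCompose_inl hvx hvy, Nat.card_image_of_injective inl_injective, deg]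

lemma deg_oreCompose_inl_left [Finite V1] [Finite V2] (hxy : G1.Adj x y) :
    deg (oreCompose G1 G2 x y z A) (inl x) + 1 = deg G1 x + (G2.neighborSet z ∩ A).ncard := by
  have hz : G2.neighborSet z ∩ A ⊆ Set.range Subtype.val := fun w hw =>
    ⟨⟨w, hw.1.ne'⟩, rfl⟩
  rw [deg, neighborSet_oreCompose_inl_left hxy.ne, Nat.card_coe_set_eq,
    Set.ncard_union_eq Set.disjoint_image_inl_image_inr,
    Set.ncard_image_of_injective _ inl_injective, Set.ncard_image_of_injective _ inr_injective,
    Set.ncard_preimage_of_injective_subset_range Subtype.val_injective hz, deg,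
    Nat.card_coe_set_eq, ← Set.ncard_sdiff_singleton_add_one (s := G1.neighborSet x) hxy]
  ring

lemma deg_oreCompose_inl_right [Finite V1] [Finite V2] (hxy : G1.Adj x y) :
    deg (oreCompose G1 G2 x y z A) (inl y) + 1 = deg G1 y + (G2.neighborSet z \ A).ncard := by
  rw [oreCompose_swap, Set.sdiff_eq]
  exact deg_oreCompose_inl_left hxy.symm

lemma deg_oreCompose_inr (v : {v : V2 // v ≠ z}) :
    deg (oreCompose G1 G2 x y z A) (inr v) = deg G2 v := by
  classical
  set x' := if v.1 ∈ A then x else y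
  let f : V2 → V1 ⊕ {v : V2 // v ≠ z} := fun w => if h : w = z then inl x' else inr ⟨w, h⟩
  have hf_inl : ∀ w u, f w = inl u ↔ w = z ∧ x' = u := by
    intro w u; by_cases hw : w = z <;> simp [f, hw]
  have hf_inr : ∀ w u, f w = inr u ↔ w = u := by
    intro w u
    by_cases hw : w = z
    · simp [f, hw, u.2.symm]
    · simp [f, hw, Subtype.ext_iff]
  have hf : Function.Injective f := by
    intro w w' h
    cases hfw : f w' with
    | inl u => rw [hfw, hf_inl] at h; rw [hf_inl] at hfw; rw [h.1, hfw.1]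
    | inr u => rw [hfw, hf_inr] at h; rw [hf_inr] at hfw; rw [h, hfw]
  have hnbr : (oreCompose G1 G2 x y z A).neighborSet (inr v) = f '' G2.neighborSet v := by
    ext (u | u) <;> simp only [mem_neighborSet, Set.mem_image, hf_inl, hf_inr]
    · rw [adj_comm, oreCompose_adj_inl_inr]
      by_cases hA : v.1 ∈ A <;> simp [x', hA, adj_comm, eq_comm, and_comm]
    · simp
  rw [deg, hnbr, Nat.card_image_of_injective hf, deg]

lemma deg_oreCompose_inl_left_add_right [Finite V1] [Finite V2] (hxy : G1.Adj x y) :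
    deg (oreCompose G1 G2 x y z A) (inl x) + deg (oreCompose G1 G2 x y z A) (inl y) + 2 =
      deg G1 x + deg G1 y + deg G2 z := by
  have hx := deg_oreCompose_inl_left (G2 := G2) (z := z) (A := A) hxy
  have hy := deg_oreCompose_inl_right (G2 := G2) (z := z) (A := A) hxy
  have hz := Set.ncard_inter_add_ncard_sdiff_eq_ncard (G2.neighborSet z) A
  rw [← deg_eq_ncard] at hz
  omega

lemma deg_le_deg_oreCompose_inl [Finite V1] [Finite V2] (hxy : G1.Adj x y)
    (hA : (G2.neighborSet z ∩ A).Nonempty) (hAc : (G2.neighborSet z \ A).Nonempty) (v : V1) :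
    deg G1 v ≤ deg (oreCompose G1 G2 x y z A) (inl v) := by
  by_cases hvx : v = x
  · subst hvx
    have := deg_oreCompose_inl_left (G2 := G2) (z := z) (A := A) hxy
    have := (Set.ncard_pos (s := G2.neighborSet z ∩ A)).2 hA
    omega
  by_cases hvy : v = y
  · subst hvy
    have := deg_oreCompose_inl_right (G2 := G2) (z := z) (A := A) hxy
    have := (Set.ncard_pos (s := G2.neighborSet z \ A)).2 hAc
    omega
  exact (deg_oreCompose_inl hvx hvy).ge

lemma numEdges_oreCompose [Finite V1] [Finite V2] (hxy : G1.Adj x y) :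
    numEdges (oreCompose G1 G2 x y z A) + 1 = numEdges G1 + numEdges G2 := by
  classical
  cases nonempty_fintype V1
  cases nonempty_fintype V2
  have hxy' : ({x, y} : Finset V1) ⊆ Finset.univ := Finset.subset_univ _
  have hsum1 : ∑ v, deg (oreCompose G1 G2 x y z A) (inl v) + 2 = ∑ v, deg G1 v + deg G2 z := by
    rw [← Finset.sum_sdiff hxy', ← Finset.sum_sdiff hxy' (f := deg G1),
      Finset.sum_pair hxy.ne, Finset.sum_pair hxy.ne,
      Finset.sum_congr rfl fun v hv => deg_oreCompose_inl (by aesop) (by aesop)]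
    have := deg_oreCompose_inl_left_add_right (G2 := G2) (z := z) (A := A) hxy
    omega
  have hsum2 : ∑ v : {v // v ≠ z}, deg (oreCompose G1 G2 x y z A) (inr v) + deg G2 z =
      ∑ v, deg G2 v := by
    simp_rw [deg_oreCompose_inr]
    rw [← (Equiv.optionSubtypeNe z).sum_comp, Fintype.sum_option]
    simp [add_comm]
  have hH := sum_deg_eq_two_mul_numEdges (oreCompose G1 G2 x y z A)
  rw [Fintype.sum_sum_type] at hH
  have h1 := sum_deg_eq_two_mul_numEdges G1
  have h2 := sum_deg_eq_two_mul_numEdges G2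
  omega

end OreCompose

namespace FourOreBounds
variable {V V1 V2 : Type} {G : SimpleGraph V} {G1 : SimpleGraph V1} {G2 : SimpleGraph V2}
  {x y : V1} {z : V2} {A : Set V2}

lemma three_mul_ncard_add_two_le_of_oreCompose (hxy : G1.Adj x y)
    (hA : (G2.neighborSet z ∩ A).Nonempty) (hAc : (G2.neighborSet z \ A).Nonempty)
    (h1 : FourOreBounds G1) (h2 : FourOreBounds G2) (S : Set (V1 ⊕ {v // v ≠ z}))
    (hS3 : ∀ v ∈ S, deg (oreCompose G1 G2 x y z A) v ≤ 3)
    (hS : ∀ u ∈ S, ∀ v ∈ S, ¬ (oreCompose G1 G2 x y z A).Adj u v) :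
    3 * S.ncard + 2 ≤ Nat.card V1 + Nat.card V2 := by
  have := h1.finite
  have := h2.finite
  have hxyS : ¬(inl x ∈ S ∧ inl y ∈ S) := by
    rintro ⟨hx, hy⟩
    have := hS3 _ hx
    have := hS3 _ hy
    have := deg_oreCompose_inl_left_add_right (G2 := G2) (z := z) (A := A) hxy
    have := h1.three_le_deg x
    have := h1.three_le_deg y
    have := h2.three_le_deg z
    omega
  have hS1 := h1.three_mul_ncard_add_one_le (inl ⁻¹' S)
    (fun v hv => (deg_le_deg_oreCompose_inl hxy hA hAc v).trans (hS3 _ hv))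
    (fun u hu v hv huv => hS _ hu _ hv <| oreCompose_adj_inl_inl.2 ⟨huv, by
      rintro (⟨rfl, rfl⟩ | ⟨rfl, rfl⟩) <;> tauto⟩)
  have hS2 := h2.three_mul_ncard_add_one_le (Subtype.val '' (inr ⁻¹' S))
    (by rintro _ ⟨v, hv, rfl⟩; exact deg_oreCompose_inr v ▸ hS3 _ hv)
    (by rintro _ ⟨u, hu, rfl⟩ _ ⟨v, hv, rfl⟩ huv
        exact hS _ hu _ hv (oreCompose_adj_inr_inr.2 huv))
  rw [Set.ncard_image_of_injective _ Subtype.val_injective] at hS2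
  have := Set.ncard_preimage_inl_add_ncard_preimage_inr S
  omega

lemma oreCompose (hxy : G1.Adj x y) (hA : (G2.neighborSet z ∩ A).Nonempty)
    (hAc : (G2.neighborSet z \ A).Nonempty) (h1 : FourOreBounds G1) (h2 : FourOreBounds G2) :
    FourOreBounds (oreCompose G1 G2 x y z A) := by
  have := h1.finite
  have := h2.finite
  have hcard : Nat.card (V1 ⊕ {v // v ≠ z}) + 1 = Nat.card V1 + Nat.card V2 := by
    rw [Nat.card_sum, ← card_subtype_ne_add_one z, add_assoc]
  refine ⟨inferInstance, ?_, ?_, fun S hS3 hS => ?_⟩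
  · rintro (v | v)
    · exact (h1.three_le_deg v).trans (deg_le_deg_oreCompose_inl hxy hA hAc v)
    · rw [deg_oreCompose_inr]
      exact h2.three_le_deg v
  · have := numEdges_oreCompose (G2 := G2) (z := z) (A := A) hxy
    have := h1.three_mul_numEdges_add_two
    have := h2.three_mul_numEdges_add_two
    omega
  · have := three_mul_ncard_add_two_le_of_oreCompose hxy hA hAc h1 h2 S hS3 hS
    omega

lemma potential_le (h : FourOreBounds G) : potential G ≤ 9/5 := by
  have := h.finite
  obtain ⟨s, hs, hcard⟩ := exists_ncard_eq_indepNum (D3 G)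
  have hα : 3 * _root_.indepNum (D3 G) + 1 ≤ Nat.card V := by
    rw [← hcard, ← Set.ncard_image_of_injective s Subtype.val_injective]
    exact h.three_mul_ncard_add_one_le _ (by rintro _ ⟨v, -, rfl⟩; exact v.2)
      (by rintro _ ⟨u, hu, rfl⟩ _ ⟨v, hv, rfl⟩; exact hs u hu v hv)
  have hE := h.three_mul_numEdges_add_two
  rw [potential]
  qify at hα hE
  linarith

end FourOreBounds

lemma IsFourOre.fourOreBounds {V : Type} {G : SimpleGraph V} (h : IsFourOre G) :
    FourOreBounds G := by
  induction h with
  | k4 G e => exact FourOreBounds.completeGraph_fin_four.of_iso e.some.symm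
  | comp G G1 G2 _ _ hG ih1 ih2 =>
    obtain ⟨x, y, z, A, hxy, hA, hAc, ⟨e⟩⟩ := hG
    exact (FourOreBounds.oreCompose hxy hA hAc ih1 ih2).of_iso e.symm

theorem statement_9_general {V : Type} (G : SimpleGraph V)
    (h : IsFourOre G) :
    potential G ≤ 9/5 :=
  h.fourOreBounds.potential_le

/-- If `G` is a `4`-Ore graph, then `p(G) ≤ 1.8`. -/
theorem statement_9 {V : Type} [Fintype V] (G : SimpleGraph V)
    (h : IsFourOre G) :
    potential G ≤ 9/5 :=
  statement_9_general G h
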